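/- arXiv:2010.03480 — 3 statements merged into one kernel-verified Lean document; each statement's English description precedes it below -/
import Mathlib

section
/- The function (x,t) ↦ (e^{-2/x²} + t²)^{-1/2} is not integrable on any neighborhood of (0,0) in ℝ²: for every ε > 0, ∫_{(-ε,ε)×(-ε,ε)} (e^{-2/x²} + t²)^{-1/2} dx dt = +∞. -/
open MeasureTheory

private lemma aux_top (δ : ℝ) (hδ : 0 < δ) :
    ∫⁻ x in Set.Ioo (0:ℝ) δ, ENNReal.ofReal (1/(4*x^2)) = ⊤ := by
  by_contra h
  have h' : Integrable (fun x : ℝ => 1/(4*x^2)) (volume.restrict (Set.Ioo 0 δ)) := by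
    refine (lintegral_ofReal_ne_top_iff_integrable ?_ ?_).mp h
    · exact ((measurable_const.div ((measurable_id.pow_const 2).const_mul 4))).aestronglyMeasurable
    · filter_upwards with x; positivity
  have h2 : IntegrableOn (fun x : ℝ => x ^ (-2:ℝ)) (Set.Ioo 0 δ) := by
    refine (h'.const_mul 4).congr ?_
    filter_upwards [ae_restrict_mem measurableSet_Ioo] with x hx
    rw [Real.rpow_neg hx.1.le, ← Real.rpow_natCast x 2]
    push_cast
    have : x ≠ 0 := ne_of_gt hx.1
    field_simp
  rw [intervalIntegral.integrableOn_Ioo_rpow_iff hδ] at h2; norm_num at h2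

private lemma inner_val (ε a : ℝ) (hε : 0 < ε) (ha : 0 < a) (haε : a < ε) :
    ∫⁻ t in Set.Ioo a ε, ENNReal.ofReal ((2*t)⁻¹)
      = ENNReal.ofReal ((Real.log ε - Real.log a)/2) := by
  have hint : IntegrableOn (fun t : ℝ => (2*t)⁻¹) (Set.Ioo a ε) := by
    apply (ContinuousOn.integrableOn_Icc ?_).mono_set Set.Ioo_subset_Icc_self
    refine ContinuousOn.inv₀ (by fun_prop) fun t ht => ?_
    have h0 : (0:ℝ) < t := ha.trans_le ht.1
    positivity
  rw [← ofReal_integral_eq_lintegral_ofReal hint ?_]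
  · congr 1
    rw [← integral_Ioc_eq_integral_Ioo, ← intervalIntegral.integral_of_le haε.le]
    have : ∀ t : ℝ, (2*t)⁻¹ = 2⁻¹ * t⁻¹ := fun t => by rw [mul_inv]
    simp_rw [this]
    rw [intervalIntegral.integral_const_mul, integral_inv_of_pos ha hε,
      Real.log_div hε.ne' ha.ne']
    ring
  · filter_upwards [ae_restrict_mem measurableSet_Ioo] with t ht
    have h0 : (0:ℝ) < t := ha.trans ht.1
    positivity

/-- (x,t) ↦ (e^{-2/x²} + t²)^{-1/2} is not integrable on any neighborhood of the origin:
its integral over every square (-ε,ε)² is infinite. -/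
theorem not_locally_integrable (ε : ℝ) (hε : 0 < ε) :
    ∫⁻ p in Set.Ioo (-ε) ε ×ˢ Set.Ioo (-ε) ε,
      ENNReal.ofReal (1 / Real.sqrt ((if p.1 = 0 then 0 else Real.exp (-2 / p.1 ^ 2))
        + p.2 ^ 2)) = ⊤ := by
  set F : ℝ × ℝ → ENNReal := fun p =>
    ENNReal.ofReal (1 / Real.sqrt ((if p.1 = 0 then 0 else Real.exp (-2 / p.1 ^ 2)) + p.2 ^ 2))
    with hFdef
  have hF : Measurable F := by
    apply Measurable.ennreal_ofReal
    apply Measurable.div measurable_const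
    apply Measurable.sqrt
    apply Measurable.add
    · exact Measurable.ite (measurableSet_eq_fun measurable_fst measurable_const) measurable_const
        ((Real.measurable_exp.comp ((measurable_const.div ((measurable_fst).pow_const 2)))))
    · exact (measurable_snd.pow_const 2)
  rw [show (volume : Measure (ℝ × ℝ)) = (volume : Measure ℝ).prod volume from
      Measure.volume_eq_prod ℝ ℝ, ← Measure.prod_restrict,
    lintegral_prod _ hF.aemeasurable]
  set c0 : ℝ := max 1 (-Real.log ε) with hc0def
  have hc0 : (1:ℝ) ≤ c0 := le_max_left _ _
  have hc0' : -Real.log ε ≤ c0 := le_max_right _ _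
  set δ : ℝ := min ε (Real.sqrt (2*c0))⁻¹ with hδdef
  have hs : (0:ℝ) < Real.sqrt (2*c0) := Real.sqrt_pos.mpr (by linarith)
  have hδ : 0 < δ := lt_min hε (by positivity)
  have hδε : δ ≤ ε := min_le_left _ _
  rw [eq_top_iff, ← aux_top δ hδ]
  calc ∫⁻ x in Set.Ioo (0:ℝ) δ, ENNReal.ofReal (1/(4*x^2))
      ≤ ∫⁻ x in Set.Ioo (0:ℝ) δ, ∫⁻ t in Set.Ioo (-ε) ε, F (x, t) := by
        apply setLIntegral_mono' measurableSet_Ioo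
        intro x hx
        -- key numeric facts about x
        have hx0 : 0 < x := hx.1
        have hxs : x * Real.sqrt (2*c0) < 1 := by
          have := mul_lt_mul_of_pos_right (hx.2.trans_le (min_le_right _ _)) hs
          rwa [inv_mul_cancel₀ hs.ne'] at this
        have key : 2*c0 < 1/x^2 := by
          rw [lt_div_iff₀ (by positivity)]
          have hp : 0 < x * Real.sqrt (2*c0) := mul_pos hx0 hs
          have hpp : (x * Real.sqrt (2*c0))^2 < 1 := by nlinarith
          have hsq2 : (x * Real.sqrt (2*c0))^2 = x^2 * (2*c0) := by
            rw [mul_pow, Real.sq_sqrt (by linarith : (0:ℝ) ≤ 2*c0)]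
          nlinarith
        set a : ℝ := Real.exp (-(1/x^2)) with hadef
        have ha : 0 < a := Real.exp_pos _
        have hloga : Real.log a = -(1/x^2) := Real.log_exp _
        have haε : a < ε := by
          rw [hadef, ← Real.exp_log hε, Real.exp_lt_exp]
          linarith
        calc ENNReal.ofReal (1/(4*x^2))
            ≤ ENNReal.ofReal ((Real.log ε - Real.log a)/2) := by
              apply ENNReal.ofReal_le_ofReal
              rw [hloga, show (1:ℝ)/(4*x^2) = (1/x^2)/4 by ring]
              have : Real.log ε ≥ -c0 := by linarith
              linarith [key]
            _ = ∫⁻ t in Set.Ioo a ε, ENNReal.ofReal ((2*t)⁻¹) :=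
              (inner_val ε a hε ha haε).symm
            _ ≤ ∫⁻ t in Set.Ioo a ε, F (x, t) := by
              apply setLIntegral_mono' measurableSet_Ioo
              intro t ht
              apply ENNReal.ofReal_le_ofReal
              have hxne : x ≠ 0 := hx0.ne'
              have ht0 : 0 < t := ha.trans ht.1
              have hEq : Real.exp (-2 / x^2) = a * a := by
                rw [show (-2 / x^2 : ℝ) = (-(1/x^2)) + (-(1/x^2)) by ring, Real.exp_add]
              simp only [hFdef, if_neg hxne, hEq]
              have hsq : Real.sqrt (a*a + t^2) ≤ 2*t := by
                rw [show (2*t : ℝ) = Real.sqrt ((2*t)^2) from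
                  (Real.sqrt_sq (by positivity)).symm]
                apply Real.sqrt_le_sqrt
                nlinarith [ht.1, ha]
              have hsqpos : 0 < Real.sqrt (a*a + t^2) := Real.sqrt_pos.mpr (by nlinarith)
              rw [one_div, inv_le_inv₀ (by positivity) hsqpos] at *
              · exact hsq
            _ ≤ ∫⁻ t in Set.Ioo (-ε) ε, F (x, t) := by
              apply lintegral_mono_set
              intro t ht
              exact ⟨lt_trans (by linarith) ht.1, ht.2⟩
    _ ≤ ∫⁻ x in Set.Ioo (-ε) ε, ∫⁻ t in Set.Ioo (-ε) ε, F (x, t) := by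
        apply lintegral_mono_set
        intro x hx
        exact ⟨lt_trans (by linarith [hx.1]) hx.1, lt_of_lt_of_le hx.2 hδε⟩
end

section
/- Let g : ℝ² → ℝ be C², u(x,y,z) = z - g(x,y), X = ∂x - (y/2)∂z, Y = ∂y + (x/2)∂z. Suppose γ : (-ε, ε) → ℝ² is differentiable with γ(0) = (0,0), and every point (γ₁(t), γ₂(t), g(γ(t))) is a characteristic point, i.e. gₓ(γ(t)) + γ₂(t)/2 = 0 and g_y(γ(t)) - γ₁(t)/2 = 0 for all t. Then the vector (γ₁'(0), γ₂'(0)) lies in the kernel of the matrix [[gₓₓ(0,0), gₓy(0,0) + 1/2],[gₓy(0,0) - 1/2, g_yy(0,0)]]. In particular, if γ'(0) ≠ 0, the origin is a degenerate characteristic point. -/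
noncomputable def qdx (g : ℝ × ℝ → ℝ) (q : ℝ × ℝ) : ℝ := fderiv ℝ g q (1, 0)
noncomputable def qdy (g : ℝ × ℝ → ℝ) (q : ℝ × ℝ) : ℝ := fderiv ℝ g q (0, 1)

/-!
Along `γ` both characteristic equations hold identically, so their derivatives at `t = 0` vanish.
By the chain rule these derivatives are `γ'(0)` paired with the second partials of `g`, plus the
contribution `±γ'(0)/2` of the linear terms; after identifying the mixed partials `g_yx = g_xy`
(`g` is `C²`) this is exactly the matrix applied to `γ'(0)`. A nonzero kernel vector forces the
determinant to vanish.
-/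

open Filter Topology

theorem fderiv_fderiv_apply_const {𝕜 E F : Type*} [NontriviallyNormedField 𝕜]
    [NormedAddCommGroup E] [NormedSpace 𝕜 E] [NormedAddCommGroup F] [NormedSpace 𝕜 F]
    {f : E → F} {x : E} (hf : DifferentiableAt 𝕜 (fderiv 𝕜 f) x) (v w : E) :
    fderiv 𝕜 (fun y => fderiv 𝕜 f y w) x v = fderiv 𝕜 (fderiv 𝕜 f) x v w := by
  simp [fderiv_clm_apply hf (differentiableAt_const w)]

theorem HasDerivAt.eq_zero_of_eventuallyEq_zero {𝕜 F : Type*} [NontriviallyNormedField 𝕜]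
    [NormedAddCommGroup F] [NormedSpace 𝕜 F] {f : 𝕜 → F} {f' : F} {x : 𝕜}
    (hf : HasDerivAt f f' x) (h : f =ᶠ[𝓝 x] 0) : f' = 0 :=
  hf.unique ((hasDerivAt_const x 0).congr_of_eventuallyEq h)

theorem DifferentiableAt.hasDerivAt_comp_partials {f : ℝ × ℝ → ℝ} {γ : ℝ → ℝ × ℝ}
    {v : ℝ × ℝ} {t : ℝ} (hf : DifferentiableAt ℝ f (γ t)) (hγ : HasDerivAt γ v t) :
    HasDerivAt (fun s => f (γ s)) (v.1 * qdx f (γ t) + v.2 * qdy f (γ t)) t := by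
  have hv : v = v.1 • ((1 : ℝ), (0 : ℝ)) + v.2 • ((0 : ℝ), (1 : ℝ)) := by ext <;> simp
  have h := hf.hasFDerivAt.comp_hasDerivAt t hγ
  rw [hv, map_add, map_smul, map_smul] at h
  exact h

section C2

variable {g : ℝ × ℝ → ℝ}

theorem ContDiff.differentiable_qdx (hg : ContDiff ℝ 2 g) : Differentiable ℝ (qdx g) :=
  ((hg.fderiv_right one_add_one_eq_two.le).clm_apply contDiff_const).differentiable one_ne_zero

theorem ContDiff.differentiable_qdy (hg : ContDiff ℝ 2 g) : Differentiable ℝ (qdy g) :=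
  ((hg.fderiv_right one_add_one_eq_two.le).clm_apply contDiff_const).differentiable one_ne_zero

theorem ContDiff.qdx_qdy_eq_qdy_qdx (hg : ContDiff ℝ 2 g) (p : ℝ × ℝ) :
    qdx (qdy g) p = qdy (qdx g) p := by
  have hD : DifferentiableAt ℝ (fderiv ℝ g) p :=
    (hg.fderiv_right one_add_one_eq_two.le).differentiable one_ne_zero p
  unfold qdx qdy
  rw [fderiv_fderiv_apply_const hD, fderiv_fderiv_apply_const hD]
  exact hg.contDiffAt.isSymmSndFDerivAt (by simp) _ _

end C2

/-- A differentiable curve of characteristic points of the graph surface {z = g(x,y)} through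
the origin has velocity in the kernel of [[gₓₓ, gₓy + 1/2],[gₓy - 1/2, g_yy]](0,0); in
particular if the velocity is nonzero, the origin is a degenerate characteristic point. -/
theorem curve_of_char_points_degenerate (g : ℝ × ℝ → ℝ) (hg : ContDiff ℝ 2 g)
    (ε : ℝ) (hε : 0 < ε) (γ : ℝ → ℝ × ℝ) (v : ℝ × ℝ)
    (hγ0 : γ 0 = (0, 0)) (hd : HasDerivAt γ v 0)
    (hchar : ∀ t ∈ Set.Ioo (-ε) ε,
      qdx g (γ t) + (γ t).2 / 2 = 0 ∧ qdy g (γ t) - (γ t).1 / 2 = 0) :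
    (!![qdx (qdx g) (0, 0), qdy (qdx g) (0, 0) + 1/2;
        qdy (qdx g) (0, 0) - 1/2, qdy (qdy g) (0, 0)]).mulVec ![v.1, v.2] = 0 ∧
    (v ≠ 0 → Matrix.det !![qdx (qdx g) (0, 0), qdy (qdx g) (0, 0) + 1/2;
        qdy (qdx g) (0, 0) - 1/2, qdy (qdy g) (0, 0)] = 0) := by
  have hchar0 : ∀ᶠ t in 𝓝 0,
      qdx g (γ t) + (γ t).2 / 2 = 0 ∧ qdy g (γ t) - (γ t).1 / 2 = 0 :=
    eventually_of_mem (Ioo_mem_nhds (neg_lt_zero.mpr hε) hε) hchar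
  have hfst : HasDerivAt (fun t => (γ t).1) v.1 0 := (hasFDerivAt_fst.comp_hasDerivAt 0 hd :)
  have hsnd : HasDerivAt (fun t => (γ t).2) v.2 0 := (hasFDerivAt_snd.comp_hasDerivAt 0 hd :)
  have e1 := ((hg.differentiable_qdx _).hasDerivAt_comp_partials hd).add (hsnd.div_const 2)
    |>.eq_zero_of_eventuallyEq_zero (hchar0.mono fun _ h => h.1)
  have e2 := ((hg.differentiable_qdy _).hasDerivAt_comp_partials hd).sub (hfst.div_const 2)
    |>.eq_zero_of_eventuallyEq_zero (hchar0.mono fun _ h => h.2)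
  rw [hγ0] at e1 e2
  rw [hg.qdx_qdy_eq_qdy_qdx] at e2
  have hker : (!![qdx (qdx g) (0, 0), qdy (qdx g) (0, 0) + 1/2;
      qdy (qdx g) (0, 0) - 1/2, qdy (qdy g) (0, 0)]).mulVec ![v.1, v.2] = 0 := by
    ext i
    fin_cases i <;> simp [Matrix.mulVec] <;> linarith
  refine ⟨hker, fun hv => Matrix.exists_mulVec_eq_zero_iff.mp ⟨_, ?_, hker⟩⟩
  contrapose! hv
  exact Prod.ext (congr_fun hv 0) (congr_fun hv 1)
end

section
/- Let α ∈ ℝ and define F(x,t) = ((αt + ξ(x) + tR(x,t))² + t²)^{1/2} where ξ(x) = c₀ x^k(1 + r(x)) with c₀ ≠ 0, k ≥ 1 an integer, r continuous with r(0)=0, and R continuous with R(0,0)=0. Then there exist a neighborhood V of (0,0) and a constant c > 0 such that F(x,t) ≥ c·(x^{2k} + t²)^{1/2} for all (x,t) ∈ V, and consequently ∫_V F(x,t)^{-1} dx dt < ∞. -/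
/-!
Where the perturbations are small (`|r x| ≤ 1/2`, `|R| ≤ 1`), the identity
`c₀ xᵏ (1 + r x) = A - α t - t R` with `A = α t + ξ x + t R` gives
`|xᵏ| ≤ C (|A| + |t|)`, hence `x^{2k} + t² ≤ (2C² + 1)(A² + t²)`, which is the lower bound.
For integrability, `√(x^{2k} + t²) ≥ max(|x|ᵏ, |t|) ≥ |x|^{1/2} |t|^{1 - 1/(2k)}`, and
the reciprocal of the right side is a product of locally integrable powers.
-/

open MeasureTheory Filter Topology

lemma locallyIntegrable_abs_rpow {s : ℝ} (hs : -1 < s) :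
    LocallyIntegrable (fun x : ℝ => |x| ^ s) := by
  refine locallyIntegrable_of_norm_le_rpow (by simp) (C := 1) (α := -s)
    (by rw [Module.finrank_self]; push_cast; linarith) (ae_of_all _ fun x => ?_)
    (continuous_abs.measurable.pow_const s).aestronglyMeasurable
  rw [neg_neg, one_mul, Real.norm_eq_abs, Real.norm_eq_abs, abs_of_nonneg (by positivity)]

theorem LocallyIntegrable.mul_prod {X Y L : Type*} [MeasurableSpace X] [TopologicalSpace X]
    [LocallyCompactSpace X] [MeasurableSpace Y] [TopologicalSpace Y] [LocallyCompactSpace Y]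
    [NormedRing L] {μ : Measure X} {ν : Measure Y} [SFinite μ] [SFinite ν] {f : X → L} {g : Y → L}
    (hf : LocallyIntegrable f μ) (hg : LocallyIntegrable g ν) :
    LocallyIntegrable (fun p : X × Y => f p.1 * g p.2) (μ.prod ν) := by
  rw [locallyIntegrable_iff]
  intro K hK
  have hprod : IntegrableOn (fun p : X × Y => f p.1 * g p.2) ((Prod.fst '' K) ×ˢ (Prod.snd '' K))
      (μ.prod ν) := by
    rw [IntegrableOn, ← Measure.prod_restrict]
    exact (hf.integrableOn_isCompact (hK.image continuous_fst)).mul_prod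
      (hg.integrableOn_isCompact (hK.image continuous_snd))
  exact hprod.mono_set Set.subset_prod

lemma rpow_mul_rpow_one_sub_le_max {a b θ : ℝ} (ha : 0 ≤ a) (hb : 0 ≤ b) (hθ₀ : 0 ≤ θ)
    (hθ₁ : θ ≤ 1) : a ^ θ * b ^ (1 - θ) ≤ max a b := by
  calc a ^ θ * b ^ (1 - θ) ≤ max a b ^ θ * max a b ^ (1 - θ) := by
        gcongr ?_ * ?_
        · exact Real.rpow_le_rpow ha (le_max_left a b) hθ₀
        · exact Real.rpow_le_rpow hb (le_max_right a b) (sub_nonneg.2 hθ₁)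
    _ = max a b := by
        rw [← Real.rpow_add' (le_max_of_le_left ha) (by norm_num), add_sub_cancel, Real.rpow_one]

lemma abs_rpow_mul_abs_rpow_le_sqrt {k : ℕ} (hk : 1 ≤ k) (x t : ℝ) :
    |x| ^ (1 / 2 : ℝ) * |t| ^ (1 - 1 / (2 * k) : ℝ) ≤ √(x ^ (2 * k) + t ^ 2) := by
  have hθ : 1 / (2 * k : ℝ) ≤ 1 := by
    rw [div_le_one (by positivity)]; exact_mod_cast (by omega : 1 ≤ 2 * k)
  have hx : |x| ^ (1 / 2 : ℝ) = (|x| ^ k) ^ (1 / (2 * k) : ℝ) := by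
    rw [← Real.rpow_natCast, ← Real.rpow_mul (abs_nonneg x)]
    congr 1; field_simp
  have hS : x ^ (2 * k) + t ^ 2 = (|x| ^ k) ^ 2 + |t| ^ 2 := by
    rw [sq_abs, ← pow_mul, mul_comm k 2, pow_abs, abs_of_nonneg (by rw [pow_mul]; positivity)]
  rw [hx, hS]
  refine (rpow_mul_rpow_one_sub_le_max (θ := 1 / (2 * k)) (by positivity) (abs_nonneg t)
    (by positivity) hθ).trans (max_le ?_ ?_)
  · exact Real.le_sqrt_of_sq_le (le_add_of_nonneg_right (sq_nonneg _))
  · exact Real.le_sqrt_of_sq_le (le_add_of_nonneg_left (sq_nonneg _))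

lemma locallyIntegrable_inv_sqrt_pow_add_sq {k : ℕ} (hk : 1 ≤ k) :
    LocallyIntegrable (fun p : ℝ × ℝ => (√(p.1 ^ (2 * k) + p.2 ^ 2))⁻¹) := by
  have hdom : LocallyIntegrable
      (fun p : ℝ × ℝ => |p.1| ^ (-(1 / 2) : ℝ) * |p.2| ^ (-(1 - 1 / (2 * k)) : ℝ)) :=
    LocallyIntegrable.mul_prod (locallyIntegrable_abs_rpow (by norm_num))
      (locallyIntegrable_abs_rpow (by linarith [show 0 < 1 / (2 * k : ℝ) by positivity]))
  refine hdom.mono (by fun_prop) ?_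
  have hx : ∀ᵐ p : ℝ × ℝ, p.1 ≠ 0 := Measure.quasiMeasurePreserving_fst.ae (Measure.ae_ne _ 0)
  have ht : ∀ᵐ p : ℝ × ℝ, p.2 ≠ 0 := Measure.quasiMeasurePreserving_snd.ae (Measure.ae_ne _ 0)
  -- `0 ^ s = 0` for `s < 0`, so the bound fails on the axes.
  filter_upwards [hx, ht] with p hx ht
  rw [Real.rpow_neg (abs_nonneg _), Real.rpow_neg (abs_nonneg _), ← mul_inv,
    norm_inv, norm_inv, Real.norm_of_nonneg (Real.sqrt_nonneg _),
    Real.norm_of_nonneg (by positivity)]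
  exact inv_anti₀ (by positivity) (abs_rpow_mul_abs_rpow_le_sqrt hk p.1 p.2)

lemma abs_le_of_abs_perturbation_le {α c₀ u t ρ σ : ℝ} (hc : c₀ ≠ 0) (hρ : |ρ| ≤ 1 / 2)
    (hσ : |σ| ≤ 1) :
    |u| ≤ 2 * (|α| + 1) / |c₀| * (|α * t + c₀ * u * (1 + ρ) + t * σ| + |t|) := by
  set A := α * t + c₀ * u * (1 + ρ) + t * σ
  have hρ' : 1 / 2 ≤ |1 + ρ| :=
    (show 1 / 2 ≤ 1 + ρ by linarith [neg_abs_le ρ]).trans (le_abs_self _)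
  have hmain : |c₀ * u| * |1 + ρ| ≤ |A| + (|α| + 1) * |t| := by
    rw [← abs_mul, show c₀ * u * (1 + ρ) = A - α * t - t * σ by ring]
    calc |A - α * t - t * σ| ≤ |A| + |α| * |t| + |t| * |σ| := by
          rw [← abs_mul, ← abs_mul]
          exact (abs_sub _ _).trans (by gcongr; exact abs_sub _ _)
      _ ≤ |A| + (|α| + 1) * |t| := by nlinarith [abs_nonneg t]
  rw [div_mul_eq_mul_div, le_div_iff₀ (abs_pos.2 hc), mul_comm, ← abs_mul]
  nlinarith [abs_nonneg (c₀ * u), abs_nonneg A, abs_nonneg α, abs_nonneg t]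

lemma sqrt_sq_add_sq_le_of_abs_le {u A t C : ℝ} (h : |u| ≤ C * (|A| + |t|)) :
    √(u ^ 2 + t ^ 2) ≤ √(2 * C ^ 2 + 1) * √(A ^ 2 + t ^ 2) := by
  rw [← Real.sqrt_mul (by positivity)]
  refine Real.sqrt_le_sqrt ?_
  have hu : u ^ 2 ≤ (C * (|A| + |t|)) ^ 2 := by
    rw [← sq_abs u]; exact pow_le_pow_left₀ (abs_nonneg u) h 2
  nlinarith [sq_abs A, sq_abs t, sq_nonneg (|A| - |t|), sq_nonneg C]

/-- Quantitative heart of the mildly degenerate case: with ξ(x) = c₀xᵏ(1 + r(x)), r(0) = 0,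
R(0,0) = 0, the function F(x,t) = √((αt + ξ(x) + tR(x,t))² + t²) is bounded below by
c·√(x^{2k} + t²) near the origin, and consequently 1/F is integrable near the origin. -/
theorem mildly_degenerate_lower_bound (α c₀ : ℝ) (hc : c₀ ≠ 0) (k : ℕ) (hk : 1 ≤ k)
    (r : ℝ → ℝ) (hr : Continuous r) (hr0 : r 0 = 0)
    (R : ℝ × ℝ → ℝ) (hR : Continuous R) (hR0 : R (0, 0) = 0) :
    let ξ : ℝ → ℝ := fun x => c₀ * x ^ k * (1 + r x)
    let F : ℝ × ℝ → ℝ :=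
      fun p => Real.sqrt ((α * p.2 + ξ p.1 + p.2 * R p) ^ 2 + p.2 ^ 2)
    ∃ V ∈ nhds ((0 : ℝ), (0 : ℝ)), ∃ c > (0 : ℝ),
      (∀ p ∈ V, c * Real.sqrt (p.1 ^ (2 * k) + p.2 ^ 2) ≤ F p) ∧
      IntegrableOn (fun p => 1 / F p) V := by
  intro ξ F
  set K := √(2 * (2 * (|α| + 1) / |c₀|) ^ 2 + 1)
  have hK : 0 < K := by positivity
  set V : Set (ℝ × ℝ) := {p | |r p.1| < 1 / 2} ∩ {p | |R p| < 1} ∩ Metric.ball 0 1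
  have hVo : IsOpen V := ((isOpen_lt (by fun_prop) continuous_const).inter
    (isOpen_lt (by fun_prop) continuous_const)).inter Metric.isOpen_ball
  have hbound : ∀ p ∈ V, K⁻¹ * √(p.1 ^ (2 * k) + p.2 ^ 2) ≤ F p := by
    rintro ⟨x, t⟩ ⟨⟨hrx, hRp⟩, -⟩
    rw [inv_mul_le_iff₀ hK, mul_comm 2 k, pow_mul]
    exact sqrt_sq_add_sq_le_of_abs_le (abs_le_of_abs_perturbation_le hc hrx.le hRp.le)
  refine ⟨V, hVo.mem_nhds (by simp [V, hr0, hR0]), K⁻¹, inv_pos.2 hK, hbound, ?_⟩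
  have hint : IntegrableOn (fun p : ℝ × ℝ => K * (√(p.1 ^ (2 * k) + p.2 ^ 2))⁻¹) V :=
    (((locallyIntegrable_inv_sqrt_pow_add_sq hk).integrableOn_isCompact
      (isCompact_closedBall 0 1)).mono_set
        (Set.inter_subset_right.trans Metric.ball_subset_closedBall)).const_mul K
  refine hint.mono' (by fun_prop : Measurable fun p => 1 / F p).aestronglyMeasurable ?_
  have hfst : ∀ᵐ p : ℝ × ℝ, p.1 ≠ 0 := Measure.quasiMeasurePreserving_fst.ae (Measure.ae_ne _ 0)
  filter_upwards [ae_restrict_mem hVo.measurableSet, ae_restrict_of_ae hfst] with p hpV hx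
  have hS : 0 < K⁻¹ * √(p.1 ^ (2 * k) + p.2 ^ 2) := by
    have := (even_two_mul k).pow_pos hx
    positivity
  rw [Real.norm_of_nonneg (by positivity)]
  calc 1 / F p ≤ 1 / (K⁻¹ * √(p.1 ^ (2 * k) + p.2 ^ 2)) :=
        one_div_le_one_div_of_le hS (hbound p hpV)
    _ = K * (√(p.1 ^ (2 * k) + p.2 ^ 2))⁻¹ := by rw [one_div, mul_inv, inv_inv]
end
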